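/- In X = ℝ², let A = {(ξ, η) : ξ² + (η − 1)² ≤ 1} (the closed disk of radius 1 centered at (0,1)) and B = ℝ × {0}, and let v = (1, 0). Define the cyclic Dykstra sequences by b_0 = v, p_0 = 0, a_{k+1} = P_A(b_k + p_k), p_{k+1} = b_k + p_k − a_{k+1}, b_{k+1} = P_B(a_{k+1}); and the baD–R sequences by x_0 = v, y_k = P_B x_k, x_{k+1} = x_k − y_k + P_A(y_k + (v − x_k)/2). Then b_1 = y_1 = (√2/2, 0), while b_2 = (2/√(22 − 8√2), 0) and y_2 = ((√2 + 2)/(2√(11 − 2√2)), 0); in particular b_2 ≠ y_2. -/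

import Mathlib

noncomputable def pt (a b : ℝ) : EuclideanSpace ℝ (Fin 2) :=
  (WithLp.equiv 2 (Fin 2 → ℝ)).symm ![a, b]

/-! Nearest points in a convex subset of a strictly convex space are unique, so `PB` is
`(ξ, η) ↦ (ξ, 0)` and, outside the disk, `PA` is the radial projection onto it (which is nearest
by the triangle inequality). With these formulas both recursions are computed by hand for two
steps, and `b₂ = y₂` would force `√2 = 3/2` after squaring. -/

open Metric

def IsNearestPoint {E : Type*} [NormedAddCommGroup E] (K : Set E) (z p : E) : Prop :=
  p ∈ K ∧ ∀ w ∈ K, ‖z - p‖ ≤ ‖z - w‖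

section NearestPoint

variable {E : Type*} [NormedAddCommGroup E] [NormedSpace ℝ E]

theorem IsNearestPoint.eq [StrictConvexSpace ℝ E] {K : Set E} (hK : Convex ℝ K) {z p q : E}
    (hp : IsNearestPoint K z p) (hq : IsNearestPoint K z q) : p = q := by
  by_contra hne
  have hpq : ‖z - p‖ = ‖z - q‖ := le_antisymm (hp.2 q hq.1) (hq.2 p hp.1)
  have hmid :
      z - ((1 / 2 : ℝ) • p + (1 / 2 : ℝ) • q) = (1 / 2 : ℝ) • ((z - p) + (z - q)) := by
    module
  have hlt : ‖z - ((1 / 2 : ℝ) • p + (1 / 2 : ℝ) • q)‖ < ‖z - p‖ := by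
    rw [hmid, norm_midpoint_lt_iff hpq]
    exact fun h => hne (sub_right_injective h)
  exact hlt.not_ge (hp.2 _ (hK hp.1 hq.1 (by norm_num) (by norm_num) (by norm_num)))

theorem isNearestPoint_closedBall {c z : E} {r : ℝ} (hr : 0 ≤ r) (hz : r < ‖z - c‖) :
    IsNearestPoint (closedBall c r) z (c + (r / ‖z - c‖) • (z - c)) := by
  have hd : 0 < ‖z - c‖ := hr.trans_lt hz
  have hdist : ‖z - (c + (r / ‖z - c‖) • (z - c))‖ = ‖z - c‖ - r := by
    rw [show z - (c + (r / ‖z - c‖) • (z - c)) = (1 - r / ‖z - c‖) • (z - c) by module,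
      norm_smul, Real.norm_of_nonneg (by rw [sub_nonneg, div_le_one hd]; exact hz.le)]
    field_simp
  refine ⟨?_, fun w hw => ?_⟩
  · rw [mem_closedBall, dist_eq_norm, add_sub_cancel_left, norm_smul,
      Real.norm_of_nonneg (by positivity), div_mul_cancel₀ _ hd.ne']
  · rw [mem_closedBall, dist_eq_norm] at hw
    rw [hdist]
    linarith [norm_sub_le_norm_sub_add_norm_sub z w c]

end NearestPoint

def disk : Set (EuclideanSpace ℝ (Fin 2)) := {z | z 0 ^ 2 + (z 1 - 1) ^ 2 ≤ 1}

def xAxis : Set (EuclideanSpace ℝ (Fin 2)) := {z | z 1 = 0}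

namespace pt

@[simp] theorem apply_zero (a b : ℝ) : pt a b 0 = a := rfl

@[simp] theorem apply_one (a b : ℝ) : pt a b 1 = b := rfl

theorem eta (z : EuclideanSpace ℝ (Fin 2)) : pt (z 0) (z 1) = z := by
  ext i; fin_cases i <;> rfl

@[simp] theorem add (a b c d : ℝ) : pt a b + pt c d = pt (a + c) (b + d) := by
  ext i; fin_cases i <;> rfl

@[simp] theorem sub (a b c d : ℝ) : pt a b - pt c d = pt (a - c) (b - d) := by
  ext i; fin_cases i <;> rfl

@[simp] theorem smul (r a b : ℝ) : r • pt a b = pt (r * a) (r * b) := by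
  ext i; fin_cases i <;> rfl

theorem norm_eq (a b : ℝ) : ‖pt a b‖ = √(a ^ 2 + b ^ 2) := by
  simp [EuclideanSpace.norm_eq, Fin.sum_univ_two]

end pt

theorem convex_xAxis : Convex ℝ xAxis :=
  convex_hyperplane (EuclideanSpace.proj (1 : Fin 2) : EuclideanSpace ℝ (Fin 2) →L[ℝ] ℝ).isLinear 0

theorem isNearestPoint_xAxis (a b : ℝ) : IsNearestPoint xAxis (pt a b) (pt a 0) := by
  refine ⟨rfl, fun w hw => ?_⟩
  rw [← pt.eta w, show w 1 = 0 from hw, pt.sub, pt.sub, pt.norm_eq, pt.norm_eq]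
  exact Real.sqrt_le_sqrt (by nlinarith [sq_nonneg (a - w 0)])

theorem disk_eq_closedBall : disk = closedBall (pt 0 1) 1 := by
  ext z
  rw [mem_closedBall, dist_eq_norm, ← pt.eta z, pt.sub, pt.norm_eq, Real.sqrt_le_one]
  simp [disk]

section Projections

variable {PA PB : EuclideanSpace ℝ (Fin 2) → EuclideanSpace ℝ (Fin 2)}

theorem eq_pt_of_isNearestPoint_xAxis (hPB : ∀ z, IsNearestPoint xAxis z (PB z)) (a b : ℝ) :
    PB (pt a b) = pt a 0 :=
  (hPB _).eq convex_xAxis (isNearestPoint_xAxis a b)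

theorem eq_pt_of_isNearestPoint_disk
    (hPA : ∀ z, IsNearestPoint disk z (PA z))
    {a b ρ : ℝ} (hρ : 1 < ρ) (hρ2 : ρ ^ 2 = a ^ 2 + (b - 1) ^ 2) :
    PA (pt a b) = pt (a / ρ) (1 + (b - 1) / ρ) := by
  have hnorm : ‖pt a b - pt 0 1‖ = ρ := by
    rw [pt.sub, pt.norm_eq, sub_zero, ← hρ2, Real.sqrt_sq (by linarith)]
  have hnear := isNearestPoint_closedBall zero_le_one (hnorm.symm ▸ hρ : 1 < ‖pt a b - pt 0 1‖)
  rw [← disk_eq_closedBall] at hnear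
  rw [(hPA _).eq (disk_eq_closedBall ▸ convex_closedBall _ _) hnear, hnorm]
  simp only [pt.sub, pt.smul, pt.add]
  congr 1 <;> ring

theorem eq_pt_of_isNearestPoint_disk_one_zero (hPA : ∀ z, IsNearestPoint disk z (PA z)) :
    PA (pt 1 0) = pt (√2 / 2) (1 - √2 / 2) := by
  have hs : √2 ^ 2 = 2 := Real.sq_sqrt zero_le_two
  rw [eq_pt_of_isNearestPoint_disk hPA (by nlinarith [Real.sqrt_nonneg 2]) (by rw [hs]; norm_num)]
  congr 1 <;> field_simp <;> linarith

theorem dykstra_iterates_one_two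
    (hPA : ∀ z, IsNearestPoint disk z (PA z)) (hPB : ∀ z, IsNearestPoint xAxis z (PB z))
    {a b p : ℕ → EuclideanSpace ℝ (Fin 2)} (hb0 : b 0 = pt 1 0) (hp0 : p 0 = 0)
    (ha : ∀ k, a (k + 1) = PA (b k + p k)) (hp : ∀ k, p (k + 1) = b k + p k - a (k + 1))
    (hb : ∀ k, b (k + 1) = PB (a (k + 1))) :
    b 1 = pt (√2 / 2) 0 ∧ b 2 = pt (2 / √(22 - 8 * √2)) 0 := by
  have hs : √2 ^ 2 = 2 := Real.sq_sqrt zero_le_two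
  have hs32 : √2 < 3 / 2 := by nlinarith [Real.sqrt_nonneg 2]
  have ha1 : a 1 = pt (√2 / 2) (1 - √2 / 2) := by
    rw [ha, hb0, hp0, add_zero, eq_pt_of_isNearestPoint_disk_one_zero hPA]
  have hb1 : b 1 = pt (√2 / 2) 0 := by
    rw [hb, ha1, eq_pt_of_isNearestPoint_xAxis hPB]
  have hbp1 : b 1 + p 1 = pt 1 (√2 / 2 - 1) := by
    rw [hp, hb0, hp0, ha1, hb1, add_zero, pt.sub, pt.add]
    congr 1 <;> ring
  have hρ : 1 < √(22 - 8 * √2) / 2 := by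
    rw [lt_div_iff₀ two_pos, one_mul, Real.lt_sqrt zero_le_two]; linarith
  have hρ2 : (√(22 - 8 * √2) / 2) ^ 2 = 1 ^ 2 + (√2 / 2 - 1 - 1) ^ 2 := by
    rw [div_pow, Real.sq_sqrt (by linarith)]; linear_combination (-1 / 4 : ℝ) * hs
  refine ⟨hb1, ?_⟩
  rw [hb, ha, hbp1, eq_pt_of_isNearestPoint_disk hPA hρ hρ2,
    eq_pt_of_isNearestPoint_xAxis hPB, one_div_div]

theorem douglasRachford_iterates_one_two
    (hPA : ∀ z, IsNearestPoint disk z (PA z)) (hPB : ∀ z, IsNearestPoint xAxis z (PB z))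
    {x y : ℕ → EuclideanSpace ℝ (Fin 2)} (hx0 : x 0 = pt 1 0) (hy : ∀ k, y k = PB (x k))
    (hx : ∀ k, x (k + 1) = x k - y k + PA (y k + (2 : ℝ)⁻¹ • (pt 1 0 - x k))) :
    y 1 = pt (√2 / 2) 0 ∧ y 2 = pt ((√2 + 2) / (2 * √(11 - 2 * √2))) 0 := by
  have hs : √2 ^ 2 = 2 := Real.sq_sqrt zero_le_two
  have hs32 : √2 < 3 / 2 := by nlinarith [Real.sqrt_nonneg 2]
  have hPB' := eq_pt_of_isNearestPoint_xAxis hPB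
  have hy0 : y 0 = pt 1 0 := by rw [hy, hx0, hPB']
  have hx1 : x 1 = pt (√2 / 2) (1 - √2 / 2) := by
    rw [hx, hx0, hy0, sub_self, smul_zero, add_zero, zero_add,
      eq_pt_of_isNearestPoint_disk_one_zero hPA]
  have hy1 : y 1 = pt (√2 / 2) 0 := by rw [hy, hx1, hPB']
  have harg : y 1 + (2 : ℝ)⁻¹ • (pt 1 0 - x 1) = pt ((√2 + 2) / 4) ((√2 - 2) / 4) := by
    rw [hy1, hx1, pt.sub, pt.smul, pt.add]
    congr 1 <;> ring
  have hρ : 1 < √(11 - 2 * √2) / 2 := by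
    rw [lt_div_iff₀ two_pos, one_mul, Real.lt_sqrt zero_le_two]; linarith
  have hρ2 : (√(11 - 2 * √2) / 2) ^ 2 = ((√2 + 2) / 4) ^ 2 + ((√2 - 2) / 4 - 1) ^ 2 := by
    rw [div_pow, Real.sq_sqrt (by linarith)]; linear_combination (-1 / 8 : ℝ) * hs
  refine ⟨hy1, ?_⟩
  rw [hy, hx, harg, hx1, hy1, eq_pt_of_isNearestPoint_disk hPA hρ hρ2, pt.sub, pt.add, hPB']
  congr 1
  field_simp
  ring

end Projections

theorem two_div_sqrt_ne_div_sqrt : 2 / √(22 - 8 * √2) ≠ (√2 + 2) / (2 * √(11 - 2 * √2)) := by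
  intro h
  have hs : √2 ^ 2 = 2 := Real.sq_sqrt zero_le_two
  have hs32 : √2 < 3 / 2 := by nlinarith [Real.sqrt_nonneg 2]
  have hsq := congrArg (· ^ 2) h
  simp only [div_pow, mul_pow, Real.sq_sqrt (by linarith : (0 : ℝ) ≤ 22 - 8 * √2),
    Real.sq_sqrt (by linarith : (0 : ℝ) ≤ 11 - 2 * √2)] at hsq
  rw [div_eq_div_iff (by linarith) (by nlinarith)] at hsq
  -- with `√2 ^ 2 = 2` this reads `176 - 32√2 = 68 + 40√2`, i.e. `√2 = 3/2`
  nlinarith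

theorem stmt_14
    (A B : Set (EuclideanSpace ℝ (Fin 2)))
    (hA : A = {z | (z 0) ^ 2 + (z 1 - 1) ^ 2 ≤ 1})
    (hB : B = {z | z 1 = 0})
    (PA PB : EuclideanSpace ℝ (Fin 2) → EuclideanSpace ℝ (Fin 2))
    (hPA : ∀ z, PA z ∈ A ∧ ∀ a ∈ A, ‖z - PA z‖ ≤ ‖z - a‖)
    (hPB : ∀ z, PB z ∈ B ∧ ∀ b ∈ B, ‖z - PB z‖ ≤ ‖z - b‖)
    (v : EuclideanSpace ℝ (Fin 2)) (hv : v = pt 1 0)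
    (a b p : ℕ → EuclideanSpace ℝ (Fin 2))
    (hb0 : b 0 = v) (hp0 : p 0 = 0)
    (ha : ∀ k, a (k + 1) = PA (b k + p k))
    (hp : ∀ k, p (k + 1) = b k + p k - a (k + 1))
    (hb : ∀ k, b (k + 1) = PB (a (k + 1)))
    (x y : ℕ → EuclideanSpace ℝ (Fin 2))
    (hx0 : x 0 = v) (hy : ∀ k, y k = PB (x k))
    (hx : ∀ k, x (k + 1) = x k - y k + PA (y k + (2 : ℝ)⁻¹ • (v - x k))) :
    b 1 = pt (Real.sqrt 2 / 2) 0 ∧ y 1 = pt (Real.sqrt 2 / 2) 0 ∧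
      b 2 = pt (2 / Real.sqrt (22 - 8 * Real.sqrt 2)) 0 ∧
      y 2 = pt ((Real.sqrt 2 + 2) / (2 * Real.sqrt (11 - 2 * Real.sqrt 2))) 0 ∧
      b 2 ≠ y 2 := by
  subst hA hB hv
  obtain ⟨hb1, hb2⟩ := dykstra_iterates_one_two hPA hPB hb0 hp0 ha hp hb
  obtain ⟨hy1, hy2⟩ := douglasRachford_iterates_one_two hPA hPB hx0 hy hx
  refine ⟨hb1, hy1, hb2, hy2, fun h => two_div_sqrt_ne_div_sqrt ?_⟩
  simpa [hb2, hy2] using congrArg (· 0) h
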